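/- arXiv:1005.2605 — 2 statements merged into one kernel-verified Lean document; each statement's English description precedes it below -/
import Mathlib

section
/- If θ is a nonempty shifted skew diagram that is a rook strip (i.e., containing at most one box in each row and at most one box in each column), then B(θ,1) = (-1)^{|θ|-1}. -/
/-- `hcoef a b = Σ_{j=0}^{min(a,b)} (-1)^j 2^{a-j} binom(a,j)`; it is `0` when `b < 0`. -/
def hcoef (a : ℕ) (b : ℤ) : ℤ :=
  ∑ j ∈ Finset.range (a + 1),
    if (j : ℤ) ≤ b then (-1) ^ j * 2 ^ (a - j) * (a.choose j) else 0

attribute [local instance] Classical.propDecidable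

/-- The south-east corners of a finite set of boxes: boxes `(i,j)` such that
neither `(i+1,j)` nor `(i,j+1)` belongs to the set. -/
def seCorners (θ : Finset (ℤ × ℤ)) : Finset (ℤ × ℤ) :=
  θ.filter fun b => (b.1 + 1, b.2) ∉ θ ∧ (b.1, b.2 + 1) ∉ θ

/-- The south-east rim of `θ`: boxes `(i,j) ∈ θ` such that no box `(i',j') ∈ θ`
has `i' > i` and `j' > j`. -/
def seRim (θ : Finset (ℤ × ℤ)) : Finset (ℤ × ℤ) :=
  θ.filter fun b => ∀ b' ∈ θ, ¬ (b.1 < b'.1 ∧ b.2 < b'.2)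

/-- `d(θ)`: the number of boxes in the south-east rim of `θ`. -/
def dRim (θ : Finset (ℤ × ℤ)) : ℕ := (seRim θ).card

/-- `θ` is a rim if it equals its own south-east rim. -/
def IsRim (θ : Finset (ℤ × ℤ)) : Prop := θ = seRim θ

/-- Two boxes are adjacent (connected) if they share a side. -/
def Adjacent (b b' : ℤ × ℤ) : Prop := |b.1 - b'.1| + |b.2 - b'.2| = 1

/-- `b'` can be reached from `b` by a chain of adjacent boxes of `θ`. -/
def Reach (θ : Finset (ℤ × ℤ)) (b b' : ℤ × ℤ) : Prop :=
  Relation.ReflTransGen (fun x y => y ∈ θ ∧ Adjacent x y) b b'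

/-- The connected components of `θ`. -/
noncomputable def comps (θ : Finset (ℤ × ℤ)) : Finset (Finset (ℤ × ℤ)) :=
  θ.image fun b => θ.filter fun b' => Reach θ b b'

/-- `N(θ)`: the number of connected components of `θ`. -/
noncomputable def Ncomp (θ : Finset (ℤ × ℤ)) : ℕ := (comps θ).card

/-- `N⁻(θ) = max(N(θ) - 1, 0)`. -/
noncomputable def Nminus (θ : Finset (ℤ × ℤ)) : ℕ := Ncomp θ - 1

/-- `N'(θ)`: the number of connected components of `θ` containing no diagonal box. -/
noncomputable def Nprime (θ : Finset (ℤ × ℤ)) : ℕ :=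
  ((comps θ).filter fun c => ∀ b ∈ c, b.1 ≠ b.2).card

/-- `B(θ,p) = Σ_S (-1)^{|S|} h(N⁻(θ∖S), d(θ∖S) - p)`, the sum over subsets `S`
of the set of south-east corners of `θ`. -/
noncomputable def Bcoef (θ : Finset (ℤ × ℤ)) (p : ℤ) : ℤ :=
  ∑ S ∈ (seCorners θ).powerset,
    (-1) ^ S.card * hcoef (Nminus (θ \ S)) ((dRim (θ \ S) : ℤ) - p)

/-- `C(θ,p) = Σ_S (-1)^{|S|} h(N'(θ∖S), d(θ∖S) - p)`, the sum over subsets `S`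
of the set of south-east corners of `θ`. -/
noncomputable def Ccoef (θ : Finset (ℤ × ℤ)) (p : ℤ) : ℤ :=
  ∑ S ∈ (seCorners θ).powerset,
    (-1) ^ S.card * hcoef (Nprime (θ \ S)) ((dRim (θ \ S) : ℤ) - p)

/-- A strict partition with largest part at most `n`, encoded as a function
with `lam i = 0` for `i` beyond the length. -/
def IsStrictPartition (n : ℕ) (lam : ℤ → ℤ) : Prop :=
  lam 1 ≤ (n : ℤ) ∧ (∀ i : ℤ, 1 ≤ i → 0 ≤ lam i) ∧
  (∀ i : ℤ, 1 ≤ i → lam (i + 1) = 0 ∨ lam (i + 1) < lam i)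

/-- The shifted Young diagram `{(i,j) : 1 ≤ i ≤ ℓ, i ≤ j ≤ λ_i + i - 1}` of a
strict partition. -/
noncomputable def shiftedD (n : ℕ) (lam : ℤ → ℤ) : Finset (ℤ × ℤ) :=
  (Finset.Icc (1 : ℤ) (n : ℤ) ×ˢ Finset.Icc (1 : ℤ) (2 * (n : ℤ))).filter
    fun b => b.1 ≤ b.2 ∧ b.2 ≤ lam b.1 + b.1 - 1

/-- `θ` is a shifted skew diagram: `θ = ν/λ` for strict partitions `λ ⊆ ν`
with `ν_1 ≤ n`. -/
def IsShiftedSkewDiagram (n : ℕ) (θ : Finset (ℤ × ℤ)) : Prop :=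
  ∃ lam nu : ℤ → ℤ, IsStrictPartition n lam ∧ IsStrictPartition n nu ∧
    (∀ i : ℤ, 1 ≤ i → lam i ≤ nu i) ∧ θ = shiftedD n nu \ shiftedD n lam

/-!
In a rook strip every box is its own connected component and is a south-east corner.
If a shifted skew diagram contained boxes `(i,j)` and `(i',j')` with `i < i'` and `j < j'`,
it would also contain `(i,j')`, a second box in row `i`; so a rook strip, and each of its
subsets, is its own south-east rim. Hence for `S ⊊ θ` the set `τ = θ ∖ S` has
`N⁻(τ) = d(τ) - 1 = |τ| - 1`, and `h(a,a) = (2 - 1)^a = 1`, while `S = θ` contributes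
`h(0,-1) = 0`. What is left is `Σ_{S ⊊ θ} (-1)^{|S|} = (-1)^{|θ|-1}`.
-/

lemma hcoef_self (a : ℕ) : hcoef a a = 1 :=
  calc hcoef a a = ∑ j ∈ Finset.range (a + 1), (-1 : ℤ) ^ j * 2 ^ (a - j) * a.choose j :=
        Finset.sum_congr rfl fun j hj =>
          if_pos (by exact_mod_cast Nat.le_of_lt_succ (Finset.mem_range.mp hj))
    _ = (-1 + 2) ^ a := (add_pow _ _ _).symm
    _ = 1 := by norm_num

lemma hcoef_of_neg (a : ℕ) {b : ℤ} (hb : b < 0) : hcoef a b = 0 :=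
  Finset.sum_eq_zero fun j _ => if_neg (by omega)

lemma Finset.sum_powerset_erase_self_neg_one_pow {α : Type*} [DecidableEq α] {s : Finset α}
    (hs : s.Nonempty) : ∑ t ∈ s.powerset.erase s, (-1 : ℤ) ^ t.card = (-1) ^ (s.card - 1) := by
  rw [Finset.sum_erase_eq_sub (Finset.mem_powerset_self s),
    Finset.sum_powerset_neg_one_pow_card_of_nonempty hs]
  obtain ⟨k, hk⟩ := Nat.exists_eq_add_one_of_ne_zero (Finset.card_pos.mpr hs).ne'
  rw [hk, Nat.add_sub_cancel, pow_succ]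
  ring

lemma IsStrictPartition.apply_add_le_apply_add {n : ℕ} {nu : ℤ → ℤ} (h : IsStrictPartition n nu)
    {i i' : ℤ} (hi : 1 ≤ i) (hii' : i ≤ i') (hpos : 0 < nu i') : nu i' + i' ≤ nu i + i := by
  induction i', hii' using Int.leInduction with
  | base => rfl
  | succ m him ih =>
    rcases h.2.2 m (hi.trans him) with h0 | hlt
    · omega
    · have := ih (by omega)
      omega

lemma mem_shiftedD {n : ℕ} {f : ℤ → ℤ} {i j : ℤ} :
    (i, j) ∈ shiftedD n f ↔
      (1 ≤ i ∧ i ≤ n) ∧ (1 ≤ j ∧ j ≤ 2 * n) ∧ i ≤ j ∧ j ≤ f i + i - 1 := by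
  simp [shiftedD, and_assoc]

lemma IsShiftedSkewDiagram.mem_of_le {n : ℕ} {θ : Finset (ℤ × ℤ)} (hθ : IsShiftedSkewDiagram n θ)
    {i j i' j' : ℤ} (hb : (i, j) ∈ θ) (hb' : (i', j') ∈ θ) (hi : i ≤ i') (hj : j ≤ j') :
    (i, j') ∈ θ := by
  obtain ⟨lam, nu, -, hnu, -, rfl⟩ := hθ
  simp only [Finset.mem_sdiff, mem_shiftedD] at hb hb' ⊢
  have := hnu.apply_add_le_apply_add hb.1.1.1 hi (by omega)
  omega

section RookStrip

def IsRookStrip (τ : Finset (ℤ × ℤ)) : Prop :=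
  (∀ b ∈ τ, ∀ b' ∈ τ, b.1 = b'.1 → b = b') ∧ (∀ b ∈ τ, ∀ b' ∈ τ, b.2 = b'.2 → b = b')

variable {τ σ : Finset (ℤ × ℤ)}

lemma IsRookStrip.mono (h : IsRookStrip τ) (hσ : σ ⊆ τ) : IsRookStrip σ :=
  ⟨fun b hb b' hb' => h.1 b (hσ hb) b' (hσ hb'), fun b hb b' hb' => h.2 b (hσ hb) b' (hσ hb')⟩

lemma Adjacent.ne {b b' : ℤ × ℤ} (h : Adjacent b b') : b ≠ b' := by
  rintro rfl
  simp [Adjacent] at h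

lemma Adjacent.fst_eq_or_snd_eq {b b' : ℤ × ℤ} (h : Adjacent b b') : b.1 = b'.1 ∨ b.2 = b'.2 := by
  by_contra! hne
  have h1 := Int.one_le_abs (sub_ne_zero.mpr hne.1)
  have h2 := Int.one_le_abs (sub_ne_zero.mpr hne.2)
  rw [Adjacent] at h
  omega

lemma IsRookStrip.not_adjacent (h : IsRookStrip τ) {b b' : ℤ × ℤ} (hb : b ∈ τ) (hb' : b' ∈ τ) :
    ¬ Adjacent b b' := fun hadj =>
  hadj.ne <| hadj.fst_eq_or_snd_eq.elim (h.1 b hb b' hb') (h.2 b hb b' hb')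

lemma IsRookStrip.eq_of_reach (h : IsRookStrip τ) {b b' : ℤ × ℤ} (hb : b ∈ τ)
    (hr : Reach τ b b') : b' = b := by
  induction hr with
  | refl => rfl
  | tail _ hstep ih => exact absurd hstep.2 (h.not_adjacent (ih ▸ hb) hstep.1)

lemma IsRookStrip.ncomp_eq_card (h : IsRookStrip τ) : Ncomp τ = τ.card := by
  have hcomps : comps τ = τ.image ({·}) := by
    refine Finset.image_congr fun b hb => Finset.ext fun c => ?_
    simp only [Finset.mem_filter, Finset.mem_singleton]
    refine ⟨fun hc => h.eq_of_reach hb hc.2, ?_⟩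
    rintro rfl
    exact ⟨hb, .refl⟩
  rw [Ncomp, hcomps, Finset.card_image_of_injective _ Finset.singleton_injective]

lemma IsRookStrip.nminus_eq (h : IsRookStrip τ) : Nminus τ = τ.card - 1 := by
  rw [Nminus, h.ncomp_eq_card]

lemma IsRookStrip.seCorners_eq (h : IsRookStrip τ) : seCorners τ = τ := by
  refine Finset.filter_true_of_mem fun b hb => ⟨fun hb' => ?_, fun hb' => ?_⟩
  · have := congrArg Prod.fst (h.2 b hb _ hb' rfl)
    omega
  · have := congrArg Prod.snd (h.1 b hb _ hb' rfl)
    omega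

end RookStrip

lemma isRim_iff {τ : Finset (ℤ × ℤ)} :
    IsRim τ ↔ ∀ b ∈ τ, ∀ b' ∈ τ, ¬ (b.1 < b'.1 ∧ b.2 < b'.2) := by
  rw [IsRim, eq_comm, seRim, Finset.filter_eq_self]

lemma IsRim.mono {τ σ : Finset (ℤ × ℤ)} (h : IsRim τ) (hσ : σ ⊆ τ) : IsRim σ :=
  isRim_iff.mpr fun b hb b' hb' => isRim_iff.mp h b (hσ hb) b' (hσ hb')

lemma IsRim.dRim_eq_card {τ : Finset (ℤ × ℤ)} (h : IsRim τ) : dRim τ = τ.card := by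
  rw [dRim, ← h]

lemma IsShiftedSkewDiagram.isRim {n : ℕ} {θ : Finset (ℤ × ℤ)} (hθ : IsShiftedSkewDiagram n θ)
    (hrook : IsRookStrip θ) : IsRim θ := by
  refine isRim_iff.mpr fun ⟨i, j⟩ hb ⟨i', j'⟩ hb' ⟨hi, hj⟩ => ?_
  have := congrArg Prod.snd (hrook.1 _ hb _ (hθ.mem_of_le hb hb' hi.le hj.le) rfl)
  simp only at this
  omega

lemma hcoef_nminus_dRim_sub_one {τ : Finset (ℤ × ℤ)} (hrook : IsRookStrip τ) (hrim : IsRim τ)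
    (hne : τ.Nonempty) : hcoef (Nminus τ) (dRim τ - 1) = 1 := by
  have hpos := Finset.card_pos.mpr hne
  rw [hrook.nminus_eq, hrim.dRim_eq_card]
  convert hcoef_self (τ.card - 1) using 2
  omega

theorem Bcoef_one_of_rook_strip_general (n : ℕ) (θ : Finset (ℤ × ℤ))
    (hθ : IsShiftedSkewDiagram n θ) (hne : θ.Nonempty)
    (hrook : (∀ b ∈ θ, ∀ b' ∈ θ, b.1 = b'.1 → b = b') ∧
             (∀ b ∈ θ, ∀ b' ∈ θ, b.2 = b'.2 → b = b')) :
    Bcoef θ 1 = (-1) ^ (θ.card - 1) := by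
  have hrook : IsRookStrip θ := hrook
  have hrim := hθ.isRim hrook
  have hfull : (-1 : ℤ) ^ θ.card * hcoef (Nminus (θ \ θ)) (dRim (θ \ θ) - 1) = 0 := by
    simp [hcoef_of_neg, dRim, seRim]
  rw [Bcoef, hrook.seCorners_eq, ← Finset.sum_erase_add _ _ (Finset.mem_powerset_self θ), hfull,
    add_zero, ← Finset.sum_powerset_erase_self_neg_one_pow hne]
  refine Finset.sum_congr rfl fun S hS => ?_
  obtain ⟨hSθ, hSsub⟩ := Finset.mem_erase.mp hS
  have hτ : (θ \ S).Nonempty :=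
    Finset.sdiff_nonempty.mpr fun h => hSθ (Finset.Subset.antisymm (Finset.mem_powerset.mp hSsub) h)
  rw [hcoef_nminus_dRim_sub_one (hrook.mono Finset.sdiff_subset) (hrim.mono Finset.sdiff_subset) hτ,
    mul_one]

/-- If `θ` is a nonempty shifted skew diagram that is a rook strip (at most one
box in each row and in each column), then `B(θ,1) = (-1)^{|θ|-1}`. -/
theorem Bcoef_one_of_rook_strip (n : ℕ) (hn : 0 < n) (θ : Finset (ℤ × ℤ))
    (hθ : IsShiftedSkewDiagram n θ) (hne : θ.Nonempty)
    (hrook : (∀ b ∈ θ, ∀ b' ∈ θ, b.1 = b'.1 → b = b') ∧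
             (∀ b ∈ θ, ∀ b' ∈ θ, b.2 = b'.2 → b = b')) :
    Bcoef θ 1 = (-1) ^ (θ.card - 1) :=
  Bcoef_one_of_rook_strip_general n θ hθ hne hrook
end

section
/- If θ is a nonempty shifted skew diagram that is a row or a column, then for every integer p ≥ 1 one has B(θ,p) = 1 if p = |θ| and B(θ,p) = 0 otherwise. -/
attribute [local instance] Classical.propDecidable

/-!
A row or column of a shifted skew diagram has no gaps (for columns because the parts of a
strict partition drop by at least one per row), so a nonempty one is a segment of
consecutive boxes. A segment is connected and is its own south-east rim, and its only
south-east corner is its last box, whose removal leaves a shorter segment. So `B(θ,p)` has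
just two terms, `h(0, |θ| - p) - h(0, |θ| - 1 - p) = [p ≤ |θ|] - [p ≤ |θ| - 1] = [p = |θ|]`.
-/

lemma hcoef_zero (b : ℤ) : hcoef 0 b = if 0 ≤ b then 1 else 0 := by
  simp [hcoef]

lemma bcoef_of_seCorners_eq_singleton {T : Finset (ℤ × ℤ)} {e : ℤ × ℤ}
    (hcorner : seCorners T = {e}) (hN : Nminus T = 0) (hd : dRim T = T.card)
    (hN' : Nminus (T \ {e}) = 0) (hd' : dRim (T \ {e}) = (T \ {e}).card) (p : ℤ) :
    Bcoef T p = if p = T.card then 1 else 0 := by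
  have he : e ∈ T := Finset.mem_of_mem_filter e (hcorner ▸ Finset.mem_singleton_self e)
  have hcard : (T \ {e}).card + 1 = T.card := by
    rw [Finset.card_sdiff_of_subset (Finset.singleton_subset_iff.2 he), Finset.card_singleton]
    have := Finset.card_pos.2 ⟨e, he⟩
    omega
  rw [Bcoef, hcorner, ← insert_empty_eq, Finset.sum_powerset_insert (Finset.notMem_empty e),
    Finset.powerset_empty, Finset.sum_singleton, Finset.sum_singleton]
  simp only [insert_empty_eq, Finset.card_empty, Finset.card_singleton, Finset.sdiff_empty,
    hN, hN', hd, hd', hcoef_zero]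
  split_ifs <;> omega

lemma Adjacent.symm {x y : ℤ × ℤ} (h : Adjacent x y) : Adjacent y x := by
  rwa [Adjacent, abs_sub_comm y.1, abs_sub_comm y.2]

lemma reach_image_Icc {f : ℤ → ℤ × ℤ} (hf : ∀ k, Adjacent (f k) (f (k + 1))) {a b x y : ℤ}
    (hx : x ∈ Finset.Icc a b) (hy : y ∈ Finset.Icc a b) :
    Reach ((Finset.Icc a b).image f) (f x) (f y) := by
  have mem {k : ℤ} (h₁ : a ≤ k) (h₂ : k ≤ b) : f k ∈ (Finset.Icc a b).image f :=
    Finset.mem_image_of_mem f (Finset.mem_Icc.2 ⟨h₁, h₂⟩)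
  rw [Finset.mem_Icc] at hx hy
  rcases le_total x y with hxy | hyx
  · induction y, hxy using Int.leInduction with
    | base => exact .refl
    | succ k hxk ih => exact (ih (by omega)).tail ⟨mem (by omega) hy.2, hf k⟩
  · induction y, hyx using Int.leInductionDown with
    | base => exact .refl
    | pred k hkx ih =>
      refine (ih (by omega)).tail ⟨mem hy.1 (by omega), ?_⟩
      simpa using (hf (k - 1)).symm

lemma nminus_eq_zero_of_reach {T : Finset (ℤ × ℤ)} (h : ∀ x ∈ T, ∀ y ∈ T, Reach T x y) :
    Nminus T = 0 := by
  have hcomps : comps T ⊆ {T} := by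
    intro C hC
    obtain ⟨x, hx, rfl⟩ := Finset.mem_image.1 hC
    exact Finset.mem_singleton.2 (Finset.filter_true_of_mem (h x hx))
  have := Finset.card_le_card hcomps
  rw [Finset.card_singleton] at this
  unfold Nminus Ncomp
  omega

lemma seRim_eq_self_of_row_or_col {T : Finset (ℤ × ℤ)}
    (h : (∃ i, ∀ x ∈ T, x.1 = i) ∨ (∃ j, ∀ x ∈ T, x.2 = j)) : seRim T = T := by
  refine Finset.filter_true_of_mem fun x hx y hy hxy => ?_
  rcases h with ⟨i, hi⟩ | ⟨j, hj⟩
  · have := hi x hx; have := hi y hy; omega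
  · have := hj x hx; have := hj y hy; omega

lemma dRim_eq_card_of_row_or_col {T : Finset (ℤ × ℤ)}
    (h : (∃ i, ∀ x ∈ T, x.1 = i) ∨ (∃ j, ∀ x ∈ T, x.2 = j)) : dRim T = T.card := by
  rw [dRim, seRim_eq_self_of_row_or_col h]

lemma exists_eq_image_Icc {α : Type*} [DecidableEq α] {f : ℤ → α} (hf : f.Injective)
    {T : Finset α} (hne : T.Nonempty) (hrange : ∀ x ∈ T, ∃ k, f k = x)
    (hconv : ∀ k₁ k k₂, f k₁ ∈ T → f k₂ ∈ T → k₁ ≤ k → k ≤ k₂ → f k ∈ T) :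
    ∃ a b, a ≤ b ∧ T = (Finset.Icc a b).image f := by
  set K := T.preimage f hf.injOn
  have hK : K.Nonempty := by
    obtain ⟨x, hx⟩ := hne
    obtain ⟨k, rfl⟩ := hrange x hx
    exact ⟨k, Finset.mem_preimage.2 hx⟩
  refine ⟨K.min' hK, K.max' hK, K.min'_le_max' hK, ?_⟩
  have hKIcc : K = Finset.Icc (K.min' hK) (K.max' hK) := by
    ext k
    rw [Finset.mem_Icc]
    refine ⟨fun hk => ⟨K.min'_le k hk, K.le_max' k hk⟩, fun hk => ?_⟩
    exact Finset.mem_preimage.2 (hconv _ k _ (Finset.mem_preimage.1 (K.min'_mem hK))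
      (Finset.mem_preimage.1 (K.max'_mem hK)) hk.1 hk.2)
  rw [← hKIcc, Finset.image_preimage]
  exact (Finset.filter_true_of_mem hrange).symm

-- Boxes are `(row, column)`: `v = (1, 0)` gives a piece of a column, `v = (0, 1)` of a row.
noncomputable def lineSeg (c v : ℤ × ℤ) (a b : ℤ) : Finset (ℤ × ℤ) :=
  (Finset.Icc a b).image fun k : ℤ => c + k • v

section lineSeg

variable {c v : ℤ × ℤ} (hv : v = (1, 0) ∨ v = (0, 1))
include hv

lemma add_smul_injective : Function.Injective fun k : ℤ => c + k • v := by
  intro k k' h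
  rcases hv with rfl | rfl <;> simpa using h

lemma adjacent_add_smul (k : ℤ) : Adjacent (c + k • v) (c + (k + 1) • v) := by
  rcases hv with rfl | rfl <;> simp [Adjacent]

lemma lineSeg_row_or_col (a b : ℤ) :
    (∃ i, ∀ x ∈ lineSeg c v a b, x.1 = i) ∨ (∃ j, ∀ x ∈ lineSeg c v a b, x.2 = j) := by
  rcases hv with rfl | rfl
  · exact .inr ⟨c.2, fun x hx => by obtain ⟨k, -, rfl⟩ := Finset.mem_image.1 hx; simp⟩
  · exact .inl ⟨c.1, fun x hx => by obtain ⟨k, -, rfl⟩ := Finset.mem_image.1 hx; simp⟩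

lemma nminus_lineSeg (a b : ℤ) : Nminus (lineSeg c v a b) = 0 := by
  refine nminus_eq_zero_of_reach fun x hx y hy => ?_
  obtain ⟨k, hk, rfl⟩ := Finset.mem_image.1 hx
  obtain ⟨l, hl, rfl⟩ := Finset.mem_image.1 hy
  exact reach_image_Icc (adjacent_add_smul hv) hk hl

lemma add_notMem_of_mem_seCorners {T : Finset (ℤ × ℤ)} {x : ℤ × ℤ} (hx : x ∈ seCorners T) :
    x + v ∉ T := by
  rw [seCorners, Finset.mem_filter] at hx
  rcases hv with rfl | rfl
  · rw [show x + (1, 0) = (x.1 + 1, x.2) from Prod.ext rfl (add_zero _)]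
    exact hx.2.1
  · rw [show x + (0, 1) = (x.1, x.2 + 1) from Prod.ext (add_zero _) rfl]
    exact hx.2.2

lemma seCorners_lineSeg {a b : ℤ} (hab : a ≤ b) : seCorners (lineSeg c v a b) = {c + b • v} := by
  ext x
  rw [Finset.mem_singleton]
  constructor
  · intro hx
    obtain ⟨k, hk, rfl⟩ := Finset.mem_image.1 (Finset.mem_filter.1 hx).1
    rw [Finset.mem_Icc] at hk
    obtain hkb | rfl := hk.2.lt_or_eq
    · refine absurd ?_ (add_notMem_of_mem_seCorners hv hx)
      rw [add_assoc, ← add_one_zsmul]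
      exact Finset.mem_image_of_mem _ (Finset.mem_Icc.2 ⟨by omega, by omega⟩)
    · rfl
  · rintro rfl
    refine Finset.mem_filter.2 ⟨Finset.mem_image_of_mem _ (Finset.mem_Icc.2 ⟨hab, le_rfl⟩), ?_⟩
    simp only [lineSeg, Finset.mem_image, Finset.mem_Icc, not_exists, not_and]
    rcases hv with rfl | rfl <;> constructor <;> intro k _ h <;> simp [Prod.ext_iff] at h <;> omega

lemma lineSeg_sdiff_last (a b : ℤ) :
    lineSeg c v a b \ {c + b • v} = lineSeg c v a (b - 1) := by
  rw [lineSeg, lineSeg, ← Finset.image_singleton (fun k : ℤ => c + k • v),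
    ← Finset.image_sdiff _ _ (add_smul_injective hv)]
  congr 1
  ext k
  simp only [Finset.mem_sdiff, Finset.mem_Icc, Finset.mem_singleton]
  omega

lemma bcoef_lineSeg {a b : ℤ} (hab : a ≤ b) (p : ℤ) :
    Bcoef (lineSeg c v a b) p = if p = (lineSeg c v a b).card then 1 else 0 := by
  have hlast := lineSeg_sdiff_last (c := c) hv a b
  exact bcoef_of_seCorners_eq_singleton (seCorners_lineSeg hv hab) (nminus_lineSeg hv a b)
    (dRim_eq_card_of_row_or_col (lineSeg_row_or_col hv a b))
    (hlast ▸ nminus_lineSeg hv a (b - 1))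
    (hlast ▸ dRim_eq_card_of_row_or_col (lineSeg_row_or_col hv a (b - 1))) p

end lineSeg

lemma IsStrictPartition.add_sub_le {n : ℕ} {f : ℤ → ℤ} (hf : IsStrictPartition n f) {i i' : ℤ}
    (hi : 1 ≤ i) (hii' : i ≤ i') (hpos : 0 < f i') : f i' + (i' - i) ≤ f i := by
  induction i', hii' using Int.leInduction with
  | base => simp
  | succ k hik ih =>
    rcases hf.2.2 k (by omega) with h | h
    · omega
    · have := ih (by omega); omega

lemma mem_shiftedD_sdiff {n : ℕ} {lam nu : ℤ → ℤ} {i j : ℤ} :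
    (i, j) ∈ shiftedD n nu \ shiftedD n lam ↔
      (1 ≤ i ∧ i ≤ n) ∧ (1 ≤ j ∧ j ≤ 2 * n) ∧ i ≤ j ∧ lam i + i ≤ j ∧ j ≤ nu i + i - 1 := by
  simp only [shiftedD, Finset.mem_sdiff, Finset.mem_filter, Finset.mem_product, Finset.mem_Icc]
  omega

namespace IsShiftedSkewDiagram

variable {n : ℕ} {θ : Finset (ℤ × ℤ)}

lemma mem_of_mem_row (hθ : IsShiftedSkewDiagram n θ) {i j₁ j j₂ : ℤ} (h₁ : (i, j₁) ∈ θ)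
    (h₂ : (i, j₂) ∈ θ) (hj₁ : j₁ ≤ j) (hj₂ : j ≤ j₂) : (i, j) ∈ θ := by
  obtain ⟨lam, nu, -, -, -, rfl⟩ := hθ
  rw [mem_shiftedD_sdiff] at h₁ h₂ ⊢
  omega

lemma mem_of_mem_col (hθ : IsShiftedSkewDiagram n θ) {i₁ i i₂ j : ℤ} (h₁ : (i₁, j) ∈ θ)
    (h₂ : (i₂, j) ∈ θ) (hi₁ : i₁ ≤ i) (hi₂ : i ≤ i₂) : (i, j) ∈ θ := by
  obtain ⟨lam, nu, hlam, hnu, -, rfl⟩ := hθ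
  rw [mem_shiftedD_sdiff] at h₁ h₂ ⊢
  have hnu_i : nu i₂ + (i₂ - i) ≤ nu i := hnu.add_sub_le (by omega) hi₂ (by omega)
  have hlam_i : lam i + i ≤ j := by
    rcases (hlam.2.1 i (by omega)).eq_or_lt with h | h
    · omega
    · have := hlam.add_sub_le h₁.1.1 hi₁ h
      omega
  omega

lemma exists_eq_lineSeg (hθ : IsShiftedSkewDiagram n θ) (hne : θ.Nonempty)
    (hrowcol : (∃ i : ℤ, ∀ b ∈ θ, b.1 = i) ∨ (∃ j : ℤ, ∀ b ∈ θ, b.2 = j)) :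
    ∃ c v a b, (v = (1, 0) ∨ v = (0, 1)) ∧ a ≤ b ∧ θ = lineSeg c v a b := by
  rcases hrowcol with ⟨i, hi⟩ | ⟨j, hj⟩
  · obtain ⟨a, b, hab, h⟩ := exists_eq_image_Icc (add_smul_injective (c := (i, 0)) (.inr rfl))
      hne (fun x hx => ⟨x.2, by simp [← hi x hx]⟩)
      (fun _ _ _ h₁ h₂ => by simpa using hθ.mem_of_mem_row (by simpa using h₁) (by simpa using h₂))
    exact ⟨(i, 0), (0, 1), a, b, .inr rfl, hab, h⟩
  · obtain ⟨a, b, hab, h⟩ := exists_eq_image_Icc (add_smul_injective (c := (0, j)) (.inl rfl))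
      hne (fun x hx => ⟨x.1, by simp [← hj x hx]⟩)
      (fun _ _ _ h₁ h₂ => by simpa using hθ.mem_of_mem_col (by simpa using h₁) (by simpa using h₂))
    exact ⟨(0, j), (1, 0), a, b, .inl rfl, hab, h⟩

end IsShiftedSkewDiagram

theorem Bcoef_of_row_or_col_general (n : ℕ) (θ : Finset (ℤ × ℤ))
    (hθ : IsShiftedSkewDiagram n θ) (hne : θ.Nonempty)
    (hrowcol : (∃ i : ℤ, ∀ b ∈ θ, b.1 = i) ∨ (∃ j : ℤ, ∀ b ∈ θ, b.2 = j))
    (p : ℤ) :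
    Bcoef θ p = if p = (θ.card : ℤ) then 1 else 0 := by
  obtain ⟨c, v, a, b, hv, hab, rfl⟩ := hθ.exists_eq_lineSeg hne hrowcol
  exact bcoef_lineSeg hv hab p

/-- If the nonempty shifted skew diagram `θ` is a row or a column, then for
every integer `p ≥ 1`, `B(θ,p) = 1` if `p = |θ|` and `B(θ,p) = 0` otherwise. -/
theorem Bcoef_of_row_or_col (n : ℕ) (hn : 0 < n) (θ : Finset (ℤ × ℤ))
    (hθ : IsShiftedSkewDiagram n θ) (hne : θ.Nonempty)
    (hrowcol : (∃ i : ℤ, ∀ b ∈ θ, b.1 = i) ∨ (∃ j : ℤ, ∀ b ∈ θ, b.2 = j))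
    (p : ℤ) (hp : 1 ≤ p) :
    Bcoef θ p = if p = (θ.card : ℤ) then 1 else 0 :=
  Bcoef_of_row_or_col_general n θ hθ hne hrowcol p
end
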